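/- Let ∇ and ∇̄ be two torsion-free affine connections related by ∇̄_X Y = ∇_X Y + φ(Y)X + φ(X)Y for a 1-form φ (projective change). Then for any skew-symmetric (0,2)-tensor density σ of projective weight 3, the symmetrized covariant derivative σ_{i(j,k)} computed with ∇̄ equals the one computed with ∇; in particular the Killing–Yano equation σ_{i(j,k)} = 0 is projectively invariant. -/

import Mathlib

/-- Lie bracket of vector fields on a (model) vector space. -/
noncomputable def vBracket {E : Type*} [NormedAddCommGroup E] [NormedSpace ℝ E]
    (v w : E → E) : E → E :=
  fun x => fderiv ℝ w x (v x) - fderiv ℝ v x (w x)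

/-- Covariant derivative, in direction Z, of a weighted (0,2)-tensor σ of
projective weight `wt` with respect to a connection ∇ and a 1-form φ recording
the projective change (the `wt * φ(Z) * σ` term is the correction coming from
the density factor, cf. ∇̄ω = ∇ω + k φ(X) ω). -/
noncomputable def covDerivWeighted {E : Type*} [NormedAddCommGroup E] [NormedSpace ℝ E]
    (conn : (E → E) → (E → E) → (E → E)) (φ : E → (E →L[ℝ] ℝ)) (wt : ℝ)
    (σ : E → (E →ₗ[ℝ] E →ₗ[ℝ] ℝ)) (Z X Y : E → E) (x : E) : ℝ :=
  fderiv ℝ (fun p => σ p (X p) (Y p)) x (Z x)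
    - σ x ((conn Z X) x) (Y x) - σ x (X x) ((conn Z Y) x)
    + wt * (φ x (Z x)) * σ x (X x) (Y x)

/-! Under the projective change, raising the weight by 2 absorbs the `φ(Z)`-terms, so
`∇̄_Z σ(X, Y) = ∇_Z σ(X, Y) - φ(X) σ(Z, Y) - φ(Y) σ(X, Z)` with the weights shifted by 2.
Symmetrizing in `Y, Z`, the `φ(Y)` and `φ(Z)` terms cancel in pairs and the two `φ(X)` terms
cancel by skew-symmetry of `σ`. -/

section ProjectiveChange

variable {E : Type*} [NormedAddCommGroup E] [NormedSpace ℝ E]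
  (conn : (E → E) → (E → E) → (E → E)) (φ : E → (E →L[ℝ] ℝ))
  (σ : E → (E →ₗ[ℝ] E →ₗ[ℝ] ℝ)) (X Y Z : E → E) (x : E)

theorem covDerivWeighted_eq_weight_zero_add (k : ℝ) :
    covDerivWeighted conn φ k σ Z X Y x
      = covDerivWeighted conn φ 0 σ Z X Y x + k * φ x (Z x) * σ x (X x) (Y x) := by
  unfold covDerivWeighted
  ring

theorem covDerivWeighted_projectiveChange {connBar : (E → E) → (E → E) → (E → E)}
    (hproj : ∀ X Y : E → E, ∀ x,
      (connBar X Y) x = (conn X Y) x + (φ x (Y x)) • X x + (φ x (X x)) • Y x)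
    (k : ℝ) :
    covDerivWeighted connBar φ (k + 2) σ Z X Y x
      = covDerivWeighted conn φ k σ Z X Y x
        - φ x (X x) * σ x (Z x) (Y x) - φ x (Y x) * σ x (X x) (Z x) := by
  simp only [covDerivWeighted, hproj, map_add, map_smul, LinearMap.add_apply,
    LinearMap.smul_apply, smul_eq_mul]
  ring

end ProjectiveChange

theorem killingYano_projectively_invariant_general
    {E : Type*} [NormedAddCommGroup E] [NormedSpace ℝ E]
    (conn connBar : (E → E) → (E → E) → (E → E)) (φ : E → (E →L[ℝ] ℝ))
    (hproj : ∀ X Y : E → E, ∀ x,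
      (connBar X Y) x = (conn X Y) x + (φ x (Y x)) • X x + (φ x (X x)) • Y x)
    (σ : E → (E →ₗ[ℝ] E →ₗ[ℝ] ℝ))
    (hskew : ∀ x u v, σ x u v = - σ x v u) :
    ∀ X Y Z : E → E, ∀ x,
      covDerivWeighted connBar φ 3 σ Z X Y x + covDerivWeighted connBar φ 3 σ Y X Z x
        = covDerivWeighted conn φ 0 σ Z X Y x + covDerivWeighted conn φ 0 σ Y X Z x := by
  intro X Y Z x
  rw [show (3 : ℝ) = 1 + 2 by norm_num,
    covDerivWeighted_projectiveChange conn φ σ X Y Z x hproj,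
    covDerivWeighted_projectiveChange conn φ σ X Z Y x hproj,
    covDerivWeighted_eq_weight_zero_add conn φ σ X Y Z x,
    covDerivWeighted_eq_weight_zero_add conn φ σ X Z Y x, hskew x (Y x) (Z x)]
  ring

/-- for two torsion-free connections ∇, ∇̄ related by the
projective change ∇̄_X Y = ∇_X Y + φ(Y)X + φ(X)Y, and any skew-symmetric
(0,2)-tensor σ of projective weight 3, the symmetrized covariant derivative
σ_{i(j,k)} computed with ∇̄ (weight 3, with the density correction) equals the
one computed with ∇; in particular the Killing–Yano equation σ_{i(j,k)} = 0 is
projectively invariant. -/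
theorem killingYano_projectively_invariant
    {E : Type*} [NormedAddCommGroup E] [NormedSpace ℝ E]
    (conn connBar : (E → E) → (E → E) → (E → E)) (φ : E → (E →L[ℝ] ℝ))
    (htf : ∀ X Y : E → E, ∀ x, (conn X Y) x - (conn Y X) x = vBracket X Y x)
    (hproj : ∀ X Y : E → E, ∀ x,
      (connBar X Y) x = (conn X Y) x + (φ x (Y x)) • X x + (φ x (X x)) • Y x)
    (σ : E → (E →ₗ[ℝ] E →ₗ[ℝ] ℝ))
    (hskew : ∀ x u v, σ x u v = - σ x v u) :
    ∀ X Y Z : E → E, ∀ x,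
      covDerivWeighted connBar φ 3 σ Z X Y x + covDerivWeighted connBar φ 3 σ Y X Z x
        = covDerivWeighted conn φ 0 σ Z X Y x + covDerivWeighted conn φ 0 σ Y X Z x :=
  killingYano_projectively_invariant_general conn connBar φ hproj σ hskew
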